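/- arXiv:2406.00733 — 4 statements merged into one kernel-verified Lean document; each statement's English description precedes it below -/
import Mathlib

section
/- Let μ_1,...,μ_n be countably additive functionals on (M, Σ), let M = ⊔_{i=1}^∞ H_i be a countable measurable partition, and suppose on each H_i there is a strong solution F_i = {F_{1,i},...,F_{n,i}}. Then the partition F = {F_1,...,F_n} of M with F_j = ⊔_{i=1}^∞ F_{j,i} is a strong solution on M. -/
/-- Strong solutions on the pieces of a countable measurable partition combine, by taking
countable disjoint unions, into a strong solution on the whole space. -/
theorem stmt2 {α : Type*} [MeasurableSpace α] (n : ℕ)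
    (μ : Fin n → Set α → ℝ)
    (hadd : ∀ (j : Fin n) (A : ℕ → Set α), (∀ i, MeasurableSet (A i)) →
      Pairwise (Function.onFun Disjoint A) →
      HasSum (fun i => μ j (A i)) (μ j (⋃ i, A i)))
    (H : ℕ → Set α)
    (hHmeas : ∀ i, MeasurableSet (H i))
    (hHdisj : Pairwise (Function.onFun Disjoint H))
    (hHcover : (⋃ i, H i) = Set.univ)
    (F : Fin n → ℕ → Set α)
    (hFmeas : ∀ j i, MeasurableSet (F j i))
    (hFdisj : ∀ i, Pairwise (Function.onFun Disjoint (fun j => F j i)))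
    (hFcover : ∀ i, (⋃ j, F j i) = H i)
    (hstrong : ∀ (i : ℕ) (j k : Fin n), μ j (F j i) ≥ μ j (F k i)) :
    (∀ j, MeasurableSet (⋃ i, F j i)) ∧
    Pairwise (Function.onFun Disjoint (fun j => ⋃ i, F j i)) ∧
    (⋃ j, ⋃ i, F j i) = Set.univ ∧
    (∀ j k, μ j (⋃ i, F j i) ≥ μ j (⋃ i, F k i)) := by
  have hsub : ∀ j i, F j i ⊆ H i := fun j i => (hFcover i) ▸ Set.subset_iUnion (fun j => F j i) j
  have hdisjI : ∀ j, Pairwise (Function.onFun Disjoint (F j)) := fun j i i' hii' =>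
    (hHdisj hii').mono (hsub j i) (hsub j i')
  refine ⟨fun j => MeasurableSet.iUnion (hFmeas j), ?_, ?_, ?_⟩
  · intro j k hjk
    rw [Function.onFun, Set.disjoint_iUnion_left]
    intro i
    rw [Set.disjoint_iUnion_right]
    intro i'
    rcases eq_or_ne i i' with rfl | hii'
    · exact hFdisj i hjk
    · exact (hHdisj hii').mono (hsub j i) (hsub k i')
  · rw [Set.iUnion_comm]
    simp only [hFcover]
    exact hHcover
  · intro j k
    have h1 := hadd j (F j) (hFmeas j) (hdisjI j)
    have h2 := hadd j (F k) (hFmeas k) (hdisjI k)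
    exact hasSum_le (fun i => hstrong i j k) h2 h1
end

section
/- For three non-atomic countably additive finite measures μ_1, μ_2, μ_3 on (M, Σ), there exists a measurable partition {F_1, F_2, F_3} of M such that μ_i(F_i) ≥ μ_i(F_j) for all i, j (a strong, i.e. envy-free, solution). -/
open MeasureTheory

/-- A measure is non-atomic if every set of positive measure has a measurable subset of
strictly smaller positive measure. -/
def Nonatomic {α : Type*} [MeasurableSpace α] (μ : Measure α) : Prop :=
  ∀ A : Set α, MeasurableSet A → 0 < μ A →
    ∃ B ⊆ A, MeasurableSet B ∧ 0 < μ B ∧ μ B < μ A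

open scoped ENNReal

namespace SCaux
variable {α : Type*} [MeasurableSpace α]

lemma exists_half (μ : Measure α) [IsFiniteMeasure μ] (hna : Nonatomic μ)
    {A : Set α} (hA : MeasurableSet A) (h0 : 0 < μ A) :
    ∃ B ⊆ A, MeasurableSet B ∧ 0 < μ B ∧ μ B ≤ μ A / 2 := by
  obtain ⟨B, hBA, hBm, hB0, hBlt⟩ := hna A hA h0
  by_cases hle : μ B ≤ μ A / 2
  · exact ⟨B, hBA, hBm, hB0, hle⟩
  · refine ⟨A \ B, Set.diff_subset, hA.diff hBm, ?_, ?_⟩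
    · have hd : μ (A \ B) = μ A - μ B :=
        measure_diff hBA hBm.nullMeasurableSet (measure_ne_top μ B)
      rw [hd]
      exact tsub_pos_of_lt hBlt
    · have hd : μ (A \ B) = μ A - μ B :=
        measure_diff hBA hBm.nullMeasurableSet (measure_ne_top μ B)
      rw [hd]
      have h2 : μ A / 2 ≤ μ B := le_of_lt (not_le.mp hle)
      calc μ A - μ B ≤ μ A - μ A / 2 := tsub_le_tsub_left h2 _
        _ ≤ μ A / 2 := by
            rw [tsub_le_iff_right, ENNReal.add_halves]

lemma exists_small (μ : Measure α) [IsFiniteMeasure μ] (hna : Nonatomic μ)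
    {A : Set α} (hA : MeasurableSet A) (h0 : 0 < μ A) {ε : ℝ≥0∞} (hε : 0 < ε) :
    ∃ B ⊆ A, MeasurableSet B ∧ 0 < μ B ∧ μ B ≤ ε := by
  have key : ∀ n : ℕ, ∃ B ⊆ A, MeasurableSet B ∧ 0 < μ B ∧ μ B ≤ μ A / 2 ^ n := by
    intro n
    induction n with
    | zero => exact ⟨A, le_refl _, hA, h0, by simp⟩
    | succ n ih =>
      obtain ⟨B, hBA, hBm, hB0, hBle⟩ := ih
      obtain ⟨C, hCB, hCm, hC0, hCle⟩ := exists_half μ hna hBm hB0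
      refine ⟨C, hCB.trans hBA, hCm, hC0, ?_⟩
      calc μ C ≤ μ B / 2 := hCle
        _ ≤ μ A / 2 ^ n / 2 := by exact ENNReal.div_le_div_right hBle 2
        _ = μ A / 2 ^ (n + 1) := by
            rw [pow_succ, div_eq_mul_inv, div_eq_mul_inv, div_eq_mul_inv, mul_assoc,
              ENNReal.mul_inv (by simp) (by simp)]
  rcases eq_or_ne ε ∞ with rfl | hεt
  · exact ⟨A, le_refl _, hA, h0, le_top⟩
  have h2 : μ A / ε ≠ ∞ := by
    simp [ENNReal.div_eq_top, hε.ne', measure_ne_top]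
  obtain ⟨n, hn⟩ := ENNReal.exists_nat_gt h2
  obtain ⟨B, hBA, hBm, hB0, hBle⟩ := key n
  refine ⟨B, hBA, hBm, hB0, hBle.trans ?_⟩
  have hn2 : μ A / ε < 2 ^ n := lt_of_lt_of_le hn (by exact_mod_cast (Nat.lt_two_pow_self (n := n)).le)
  rw [ENNReal.div_lt_iff (Or.inl hε.ne') (Or.inl hεt)] at hn2
  rw [ENNReal.div_le_iff (by positivity) (by simp)]
  calc μ A ≤ 2 ^ n * ε := hn2.le
    _ = ε * 2 ^ n := mul_comm _ _


lemma exists_subset_eq (μ : Measure α) [IsFiniteMeasure μ] (hna : Nonatomic μ)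
    {A : Set α} (hA : MeasurableSet A) {r : ℝ≥0∞} (hr : r ≤ μ A) :
    ∃ B ⊆ A, MeasurableSet B ∧ μ B = r := by
  classical
  set G : Set α → Prop := fun B => MeasurableSet B ∧ B ⊆ A ∧ μ B ≤ r with hGdef
  have key : ∀ B, G B → ∃ B', G B' ∧ B ⊆ B' ∧
      ∀ C, MeasurableSet C → C ⊆ A \ B → μ B + μ C ≤ r → μ B + μ C / 2 ≤ μ B' := by
    intro B hB
    set γ : ℝ≥0∞ := ⨆ (C : Set α) (_ : MeasurableSet C ∧ C ⊆ A \ B ∧ μ B + μ C ≤ r), μ C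
      with hγdef
    have hγr : γ ≤ r := by
      refine iSup₂_le fun C hC => ?_
      exact le_trans le_add_self hC.2.2
    by_cases hγ0 : γ = 0
    · refine ⟨B, hB, le_refl _, fun C hCm hCA hCr => ?_⟩
      have : μ C ≤ γ := le_iSup₂_of_le C ⟨hCm, hCA, hCr⟩ (le_refl _)
      have hC0 : μ C = 0 := le_antisymm (this.trans_eq hγ0) zero_le
      simp [hC0]
    · have hγt : γ ≠ ∞ := (hγr.trans_lt (lt_of_le_of_lt hr (measure_lt_top μ A))).ne
      have hhalf : γ / 2 < γ := ENNReal.half_lt_self hγ0 hγt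
      rw [hγdef] at hhalf
      obtain ⟨C, hC⟩ := lt_iSup_iff.mp hhalf
      obtain ⟨hCprop, hCγ⟩ := lt_iSup_iff.mp hC
      obtain ⟨hCm, hCA, hCr⟩ := hCprop
      have hdisj : Disjoint B C := Set.disjoint_left.mpr fun x hxB hxC => (hCA hxC).2 hxB
      have hu : μ (B ∪ C) = μ B + μ C := measure_union hdisj hCm
      refine ⟨B ∪ C, ⟨hB.1.union hCm, Set.union_subset hB.2.1 (hCA.trans Set.diff_subset),
        by rw [hu]; exact hCr⟩, Set.subset_union_left, fun D hDm hDA hDr => ?_⟩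
      have hDγ : μ D ≤ γ := le_iSup₂_of_le D ⟨hDm, hDA, hDr⟩ (le_refl _)
      rw [hu]
      exact add_le_add_right (le_trans (ENNReal.div_le_div_right hDγ 2) hCγ.le) _
  choose! step hstep using key
  set seq : ℕ → Set α := fun n => step^[n] ∅ with hseq
  have hG0 : G ∅ := ⟨MeasurableSet.empty, Set.empty_subset _, by simp⟩
  have hseqS : ∀ n, seq (n + 1) = step (seq n) := by
    intro n
    rw [hseq]
    simp [Function.iterate_succ_apply']
  have hGseq : ∀ n, G (seq n) := by
    intro n
    induction n with
    | zero => exact hG0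
    | succ n ih => rw [hseqS]; exact (hstep _ ih).1
  have hmono : ∀ n, seq n ⊆ seq (n + 1) := fun n => by
    rw [hseqS]; exact (hstep _ (hGseq n)).2.1
  have hmono' : Monotone seq := monotone_nat_of_le_succ hmono
  set Binf : Set α := ⋃ n, seq n with hBi
  have hBm : MeasurableSet Binf := MeasurableSet.iUnion fun n => (hGseq n).1
  have hBA : Binf ⊆ A := Set.iUnion_subset fun n => (hGseq n).2.1
  have hBμ : μ Binf = ⨆ n, μ (seq n) :=
    Directed.measure_iUnion (hmono'.directed_le)
  have hBr : μ Binf ≤ r := by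
    rw [hBμ]; exact iSup_le fun n => (hGseq n).2.2
  refine ⟨Binf, hBA, hBm, le_antisymm hBr ?_⟩
  by_contra hlt
  push_neg at hlt
  have hApos : 0 < μ (A \ Binf) := by
    have : μ (A \ Binf) = μ A - μ Binf :=
      measure_diff hBA hBm.nullMeasurableSet (measure_ne_top μ _)
    rw [this]
    exact tsub_pos_of_lt (lt_of_lt_of_le hlt hr)
  have hδ : 0 < r - μ Binf := tsub_pos_of_lt hlt
  obtain ⟨C, hCA, hCm, hC0, hCle⟩ := exists_small μ hna (hA.diff hBm) hApos hδ
  have hstepC : ∀ n, μ (seq n) + μ C / 2 ≤ μ (seq (n + 1)) := by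
    intro n
    rw [hseqS]
    refine (hstep _ (hGseq n)).2.2 C hCm ?_ ?_
    · exact hCA.trans (Set.diff_subset_diff_right (Set.subset_iUnion seq n))
    · calc μ (seq n) + μ C ≤ μ Binf + (r - μ Binf) := by
            refine add_le_add ?_ hCle
            rw [hBμ]; exact le_iSup (fun n => μ (seq n)) n
        _ = r := by rw [add_comm, tsub_add_cancel_of_le hlt.le]
  have hC20 : 0 < μ C / 2 := ENNReal.div_pos hC0.ne' (by simp)
  have hgrow : ∀ n : ℕ, (n : ℝ≥0∞) * (μ C / 2) ≤ μ (seq n) := by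
    intro n
    induction n with
    | zero => simp
    | succ n ih =>
      push_cast
      rw [add_mul, one_mul]
      exact le_trans (add_le_add_left ih _) (hstepC n)
  have hC2t : μ C / 2 ≠ ∞ := by
    simp [ENNReal.div_eq_top, measure_ne_top μ C]
  have hdiv : r / (μ C / 2) ≠ ∞ := by
    simp [ENNReal.div_eq_top, hC20.ne', (hr.trans_lt (measure_lt_top μ A)).ne]
  obtain ⟨n, hn⟩ := ENNReal.exists_nat_gt hdiv
  have hcon : μ (seq n) ≤ r := (hGseq n).2.2
  have hle : (n : ℝ≥0∞) * (μ C / 2) ≤ r := le_trans (hgrow n) hcon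
  have h3 : r < (n : ℝ≥0∞) * (μ C / 2) :=
    (ENNReal.div_lt_iff (Or.inl hC20.ne') (Or.inl hC2t)).mp hn
  exact absurd hle (not_le.mpr h3)


lemma third_split (μ : Measure α) [IsFiniteMeasure μ] (hna : Nonatomic μ)
    {T : Set α} (hT : MeasurableSet T) :
    ∃ t1 t2 t3 : Set α, MeasurableSet t1 ∧ MeasurableSet t2 ∧ MeasurableSet t3 ∧
      t1 ⊆ T ∧ t2 ⊆ T ∧ t3 ⊆ T ∧
      Disjoint t1 t2 ∧ Disjoint t1 t3 ∧ Disjoint t2 t3 ∧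
      t1 ∪ t2 ∪ t3 = T ∧
      μ t1 = μ T / 3 ∧ μ t2 = μ T / 3 ∧ μ t3 = μ T / 3 := by
  set c := μ T / 3 with hc
  have hct : c ≠ ∞ := by
    rw [hc]
    simp [ENNReal.div_eq_top, measure_ne_top μ T]
  have h3 : μ T = c + c + c := by
    have h := ENNReal.div_mul_cancel (a := (3:ℝ≥0∞)) (b := μ T) (by norm_num) (by norm_num)
    calc μ T = μ T / 3 * 3 := h.symm
      _ = c + c + c := by rw [← hc]; ring
  have hc1 : c ≤ μ T := by rw [h3]; exact le_add_self
  obtain ⟨t1, ht1T, ht1m, ht1⟩ := exists_subset_eq μ hna hT hc1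
  have hRm : MeasurableSet (T \ t1) := hT.diff ht1m
  have hRμ : μ (T \ t1) = c + c := by
    rw [measure_diff ht1T ht1m.nullMeasurableSet (measure_ne_top μ t1), ht1, h3,
      ENNReal.add_sub_cancel_right hct]
  obtain ⟨t2, ht2R, ht2m, ht2⟩ := exists_subset_eq μ hna hRm
    (by rw [hRμ]; exact le_add_self : c ≤ μ (T \ t1))
  refine ⟨t1, t2, (T \ t1) \ t2, ht1m, ht2m, hRm.diff ht2m, ht1T,
    ht2R.trans Set.diff_subset, Set.diff_subset.trans Set.diff_subset,
    Set.disjoint_left.mpr fun x h1 h2 => (ht2R h2).2 h1,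
    Set.disjoint_left.mpr fun x h1 h2 => h2.1.2 h1,
    Set.disjoint_left.mpr fun x h1 h2 => h2.2 h1, ?_, ht1, ht2, ?_⟩
  · rw [Set.union_assoc, Set.union_diff_cancel ht2R, Set.union_diff_cancel ht1T]
  · rw [measure_diff ht2R ht2m.nullMeasurableSet (measure_ne_top μ t2), hRμ, ht2,
      ENNReal.add_sub_cancel_right hct]

lemma assemble (ν1 νA νB : Measure α) {m1 mA mB T t1 ta tb : Set α}
    (hm1 : MeasurableSet m1) (hmA : MeasurableSet mA) (hmB : MeasurableSet mB)
    (ht1 : MeasurableSet t1) (hta : MeasurableSet ta) (htb : MeasurableSet tb)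
    (d1A : Disjoint m1 mA) (d1B : Disjoint m1 mB) (dAB : Disjoint mA mB)
    (d1T : Disjoint m1 T) (dAT : Disjoint mA T) (dBT : Disjoint mB T)
    (st1 : t1 ⊆ T) (sta : ta ⊆ T) (stb : tb ⊆ T)
    (dt1a : Disjoint t1 ta) (dt1b : Disjoint t1 tb) (dtab : Disjoint ta tb)
    (hcov : m1 ∪ mA ∪ mB ∪ T = Set.univ) (htcov : t1 ∪ ta ∪ tb = T)
    (h1A : ν1 mA ≤ ν1 m1) (h1t : ν1 ta ≤ ν1 t1) (h1B : ν1 mB + ν1 T ≤ ν1 m1)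
    (hA1 : νA m1 ≤ νA mA) (hAB : νA mB ≤ νA mA)
    (hAt1 : νA t1 ≤ νA ta) (hAtb : νA tb ≤ νA ta)
    (hB1 : νB m1 ≤ νB mB) (hBA : νB mA ≤ νB mB)
    (hBt1 : νB t1 ≤ νB tb) (hBta : νB ta ≤ νB tb) :
    ∃ F1 FA FB : Set α, MeasurableSet F1 ∧ MeasurableSet FA ∧ MeasurableSet FB ∧
      Disjoint F1 FA ∧ Disjoint F1 FB ∧ Disjoint FA FB ∧ F1 ∪ FA ∪ FB = Set.univ ∧
      ν1 FA ≤ ν1 F1 ∧ ν1 FB ≤ ν1 F1 ∧ νA F1 ≤ νA FA ∧ νA FB ≤ νA FA ∧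
      νB F1 ≤ νB FB ∧ νB FA ≤ νB FB := by
  have u1 : ∀ ν : Measure α, ν (m1 ∪ t1) = ν m1 + ν t1 :=
    fun ν => measure_union (d1T.mono_right st1) ht1
  have uA : ∀ ν : Measure α, ν (mA ∪ ta) = ν mA + ν ta :=
    fun ν => measure_union (dAT.mono_right sta) hta
  have uB : ∀ ν : Measure α, ν (mB ∪ tb) = ν mB + ν tb :=
    fun ν => measure_union (dBT.mono_right stb) htb
  refine ⟨m1 ∪ t1, mA ∪ ta, mB ∪ tb, hm1.union ht1, hmA.union hta, hmB.union htb,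
    ?_, ?_, ?_, ?_, ?_, ?_, ?_, ?_, ?_, ?_⟩
  · exact Set.disjoint_union_left.mpr
      ⟨Set.disjoint_union_right.mpr ⟨d1A, d1T.mono_right sta⟩,
       Set.disjoint_union_right.mpr ⟨(dAT.mono_right st1).symm, dt1a⟩⟩
  · exact Set.disjoint_union_left.mpr
      ⟨Set.disjoint_union_right.mpr ⟨d1B, d1T.mono_right stb⟩,
       Set.disjoint_union_right.mpr ⟨(dBT.mono_right st1).symm, dt1b⟩⟩
  · exact Set.disjoint_union_left.mpr
      ⟨Set.disjoint_union_right.mpr ⟨dAB, dAT.mono_right stb⟩,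
       Set.disjoint_union_right.mpr ⟨(dBT.mono_right sta).symm, dtab⟩⟩
  · rw [Set.eq_univ_iff_forall]
    intro x
    have hx : x ∈ m1 ∪ mA ∪ mB ∪ T := hcov ▸ Set.mem_univ x
    rw [← htcov] at hx
    simp only [Set.mem_union] at hx ⊢
    tauto
  · rw [u1, uA]; exact add_le_add h1A h1t
  · rw [u1, uB]
    calc ν1 mB + ν1 tb ≤ ν1 mB + ν1 T := add_le_add_right (measure_mono stb) _
      _ ≤ ν1 m1 := h1B
      _ ≤ ν1 m1 + ν1 t1 := le_self_add
  · rw [u1, uA]; exact add_le_add hA1 hAt1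
  · rw [uB, uA]; exact add_le_add hAB hAtb
  · rw [u1, uB]; exact add_le_add hB1 hBt1
  · rw [uA, uB]; exact add_le_add hBA hBta


lemma stepL (ν1 νA νB : Measure α) [IsFiniteMeasure νA] (hnaA : Nonatomic νA)
    {m1 mA mB T : Set α}
    (hm1 : MeasurableSet m1) (hmA : MeasurableSet mA) (hmB : MeasurableSet mB)
    (hTm : MeasurableSet T)
    (d1A : Disjoint m1 mA) (d1B : Disjoint m1 mB) (dAB : Disjoint mA mB)
    (d1T : Disjoint m1 T) (dAT : Disjoint mA T) (dBT : Disjoint mB T)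
    (hcov : m1 ∪ mA ∪ mB ∪ T = Set.univ)
    (h1A : ν1 mA ≤ ν1 m1) (h1B : ν1 mB + ν1 T ≤ ν1 m1)
    (hA1 : νA m1 ≤ νA mA) (hAB : νA mB ≤ νA mA)
    (hB1 : νB m1 ≤ νB mB) (hBA : νB mA ≤ νB mB) :
    ∃ F1 FA FB : Set α, MeasurableSet F1 ∧ MeasurableSet FA ∧ MeasurableSet FB ∧
      Disjoint F1 FA ∧ Disjoint F1 FB ∧ Disjoint FA FB ∧ F1 ∪ FA ∪ FB = Set.univ ∧
      ν1 FA ≤ ν1 F1 ∧ ν1 FB ≤ ν1 F1 ∧ νA F1 ≤ νA FA ∧ νA FB ≤ νA FA ∧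
      νB F1 ≤ νB FB ∧ νB FA ≤ νB FB := by
  obtain ⟨u1, u2, u3, hu1, hu2, hu3, s1, s2, s3, d12, d13, d23, hucov, e1, e2, e3⟩ :=
    third_split νA hnaA hTm
  have pick : ∀ p q s : Set α, MeasurableSet p → MeasurableSet q → MeasurableSet s →
      p ⊆ T → q ⊆ T → s ⊆ T → Disjoint p q → Disjoint p s → Disjoint q s →
      p ∪ q ∪ s = T → νA p = νA T / 3 → νA q = νA T / 3 → νA s = νA T / 3 →
      νB p ≤ νB s → νB q ≤ νB s →
      ∃ F1 FA FB : Set α, MeasurableSet F1 ∧ MeasurableSet FA ∧ MeasurableSet FB ∧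
        Disjoint F1 FA ∧ Disjoint F1 FB ∧ Disjoint FA FB ∧ F1 ∪ FA ∪ FB = Set.univ ∧
        ν1 FA ≤ ν1 F1 ∧ ν1 FB ≤ ν1 F1 ∧ νA F1 ≤ νA FA ∧ νA FB ≤ νA FA ∧
        νB F1 ≤ νB FB ∧ νB FA ≤ νB FB := by
    intro p q s hp hq hs hpT hqT hsT dpq dps dqs hpqs ep eq' es hps hqs
    rcases le_total (ν1 q) (ν1 p) with h | h
    · exact assemble ν1 νA νB hm1 hmA hmB hp hq hs d1A d1B dAB d1T dAT dBT
        hpT hqT hsT dpq dps dqs hcov hpqs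
        h1A h h1B hA1 hAB (by rw [ep, eq']) (by rw [es, eq']) hB1 hBA hps hqs
    · refine assemble ν1 νA νB hm1 hmA hmB hq hp hs d1A d1B dAB d1T dAT dBT
        hqT hpT hsT dpq.symm dqs dps ?_ ?_
        h1A h h1B hA1 hAB (by rw [ep, eq']) (by rw [es, ep]) hB1 hBA hqs hps
      · exact hcov
      · rw [Set.union_comm q p]; exact hpqs
  have hcov2 : u1 ∪ u3 ∪ u2 = T := by
    rw [← hucov]; ext x; simp only [Set.mem_union]; tauto
  have hcov3 : u2 ∪ u3 ∪ u1 = T := by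
    rw [← hucov]; ext x; simp only [Set.mem_union]; tauto
  rcases le_total (νB u1) (νB u2) with h12 | h12
  · rcases le_total (νB u2) (νB u3) with h23 | h23
    · exact pick u1 u2 u3 hu1 hu2 hu3 s1 s2 s3 d12 d13 d23 hucov e1 e2 e3
        (h12.trans h23) h23
    · exact pick u1 u3 u2 hu1 hu3 hu2 s1 s3 s2 d13 d12 d23.symm hcov2 e1 e3 e2
        h12 h23
  · rcases le_total (νB u1) (νB u3) with h13 | h13
    · exact pick u1 u2 u3 hu1 hu2 hu3 s1 s2 s3 d12 d13 d23 hucov e1 e2 e3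
        h13 (h12.trans h13)
    · exact pick u2 u3 u1 hu2 hu3 hu1 s2 s3 s1 d23 d12.symm d13.symm hcov3 e2 e3 e1
        h12 h13


lemma pack (μ : Fin 3 → Measure α) {F0 F1 F2 : Set α}
    (h0 : MeasurableSet F0) (h1 : MeasurableSet F1) (h2 : MeasurableSet F2)
    (d01 : Disjoint F0 F1) (d02 : Disjoint F0 F2) (d12 : Disjoint F1 F2)
    (hcov : ∀ x, x ∈ F0 ∨ x ∈ F1 ∨ x ∈ F2)
    (h01 : μ 0 F1 ≤ μ 0 F0) (h02 : μ 0 F2 ≤ μ 0 F0)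
    (h10 : μ 1 F0 ≤ μ 1 F1) (h12 : μ 1 F2 ≤ μ 1 F1)
    (h20 : μ 2 F0 ≤ μ 2 F2) (h21 : μ 2 F1 ≤ μ 2 F2) :
    ∃ F : Fin 3 → Set α, (∀ i, MeasurableSet (F i)) ∧
      Pairwise (Function.onFun Disjoint F) ∧ (⋃ i, F i) = Set.univ ∧
      ∀ i j, μ i (F j) ≤ μ i (F i) := by
  refine ⟨![F0, F1, F2], ?_, ?_, ?_, ?_⟩
  · intro i; fin_cases i <;> simpa
  · intro i j hij
    fin_cases i <;> fin_cases j <;>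
      simp only [Function.onFun, Matrix.cons_val_zero, Matrix.cons_val_one,
        Matrix.head_cons, Matrix.cons_val_two, Matrix.tail_cons] <;>
      first
        | exact absurd rfl hij
        | exact d01 | exact d02 | exact d12
        | exact d01.symm | exact d02.symm | exact d12.symm
  · rw [Set.iUnion_eq_univ_iff]
    intro x
    rcases hcov x with h | h | h
    exacts [⟨0, h⟩, ⟨1, h⟩, ⟨2, h⟩]
  · intro i j
    fin_cases i <;> fin_cases j <;>
      simp only [Matrix.cons_val_zero, Matrix.cons_val_one,
        Matrix.head_cons, Matrix.cons_val_two, Matrix.tail_cons] <;>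
      first | exact le_rfl | assumption

lemma sortedCase (μ : Fin 3 → Measure α) (hfin : ∀ i, IsFiniteMeasure (μ i))
    (hna : ∀ i, Nonatomic (μ i)) {B1 B2 B3 : Set α}
    (hB1 : MeasurableSet B1) (hB2 : MeasurableSet B2) (hB3 : MeasurableSet B3)
    (d12 : Disjoint B1 B2) (d13 : Disjoint B1 B3) (d23 : Disjoint B2 B3)
    (hcov : ∀ x, x ∈ B1 ∨ x ∈ B2 ∨ x ∈ B3)
    (e12 : μ 0 B1 = μ 0 B2) (e23 : μ 0 B2 = μ 0 B3)
    (s12 : μ 1 B2 ≤ μ 1 B1) (s23 : μ 1 B3 ≤ μ 1 B2) :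
    ∃ F : Fin 3 → Set α, (∀ i, MeasurableSet (F i)) ∧
      Pairwise (Function.onFun Disjoint F) ∧ (⋃ i, F i) = Set.univ ∧
      ∀ i j, μ i (F j) ≤ μ i (F i) := by
  haveI := hfin 0; haveI := hfin 1; haveI := hfin 2
  obtain ⟨T, hTB1, hTm, hTμ⟩ :=
    exists_subset_eq (μ 1) (hna 1) hB1 (tsub_le_self : μ 1 B1 - μ 1 B2 ≤ μ 1 B1)
  set B1' := B1 \ T with hB1'def
  have hB1'm : MeasurableSet B1' := hB1.diff hTm
  have hB1'mu : μ 1 B1' = μ 1 B2 := by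
    rw [hB1'def, measure_diff hTB1 hTm.nullMeasurableSet (measure_ne_top _ _), hTμ,
      ENNReal.sub_sub_cancel (measure_ne_top _ _) s12]
  have hsplit : B1' ∪ T = B1 := Set.diff_union_of_subset hTB1
  have hdisj' : Disjoint B1' T := disjoint_sdiff_self_left
  have hadd : ∀ ν : Measure α, ν B1' + ν T = ν B1 := fun ν => by
    rw [← measure_union hdisj' hTm, hsplit]
  have d2B1' : Disjoint B2 B1' := d12.symm.mono_right Set.diff_subset
  have d3B1' : Disjoint B3 B1' := d13.symm.mono_right Set.diff_subset
  have d2T : Disjoint B2 T := d12.symm.mono_right hTB1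
  have d3T : Disjoint B3 T := d13.symm.mono_right hTB1
  have hxB1 : ∀ x, x ∈ B1 → x ∈ B1' ∨ x ∈ T := fun x hx => by
    rw [← hsplit] at hx; exact hx
  have covA : B3 ∪ B2 ∪ B1' ∪ T = Set.univ := by
    rw [Set.eq_univ_iff_forall]
    intro x
    have h := hcov x
    have h1 := hxB1 x
    simp only [Set.mem_union]
    tauto
  have covB : B2 ∪ B3 ∪ B1' ∪ T = Set.univ := by
    rw [Set.eq_univ_iff_forall]
    intro x
    have h := hcov x
    have h1 := hxB1 x
    simp only [Set.mem_union]
    tauto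
  have caseII : μ 2 B1' < μ 2 B2 ∨ μ 2 B1' < μ 2 B3 →
      ∃ F : Fin 3 → Set α, (∀ i, MeasurableSet (F i)) ∧
        Pairwise (Function.onFun Disjoint F) ∧ (⋃ i, F i) = Set.univ ∧
        ∀ i j, μ i (F j) ≤ μ i (F i) := by
    intro hlt
    rcases le_total (μ 2 B3) (μ 2 B2) with hs | hs
    · obtain ⟨F1, FA, FB, mF1, mFA, mFB, D1A, D1B, DAB, cov, i1A, i1B, iA1, iAB, iB1, iBA⟩ :=
        stepL (μ 0) (μ 2) (μ 1) (hna 2) hB3 hB2 hB1'm hTm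
          d23.symm d3B1' d2B1' d3T d2T hdisj' covA
          (le_of_eq e23)
          (by rw [hadd (μ 0), e12, e23])
          hs
          (hlt.elim le_of_lt fun h => (h.trans_le hs).le)
          (by rw [hB1'mu]; exact s23)
          (le_of_eq hB1'mu.symm)
      have covx : ∀ x, x ∈ F1 ∨ x ∈ FB ∨ x ∈ FA := fun x => by
        have h : x ∈ F1 ∪ FA ∪ FB := cov.symm ▸ Set.mem_univ x
        simp only [Set.mem_union] at h
        tauto
      exact pack μ mF1 mFB mFA D1B D1A DAB.symm covx i1B i1A iB1 iBA iA1 iAB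
    · obtain ⟨F1, FA, FB, mF1, mFA, mFB, D1A, D1B, DAB, cov, i1A, i1B, iA1, iAB, iB1, iBA⟩ :=
        stepL (μ 0) (μ 2) (μ 1) (hna 2) hB2 hB3 hB1'm hTm
          d23 d2B1' d3B1' d2T d3T hdisj' covB
          (by rw [e23])
          (by rw [hadd (μ 0), e12])
          hs
          (hlt.elim (fun h => (h.trans_le hs).le) le_of_lt)
          (le_of_eq hB1'mu.symm)
          (by rw [hB1'mu]; exact s23)
      have covx : ∀ x, x ∈ F1 ∨ x ∈ FB ∨ x ∈ FA := fun x => by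
        have h : x ∈ F1 ∪ FA ∪ FB := cov.symm ▸ Set.mem_univ x
        simp only [Set.mem_union] at h
        tauto
      exact pack μ mF1 mFB mFA D1B D1A DAB.symm covx i1B i1A iB1 iBA iA1 iAB
  rcases le_or_gt (μ 2 B2) (μ 2 B1') with hc2 | hc2
  · rcases le_or_gt (μ 2 B3) (μ 2 B1') with hc3 | hc3
    · obtain ⟨F1, FA, FB, mF1, mFA, mFB, D1A, D1B, DAB, cov, i1A, i1B, iA1, iAB, iB1, iBA⟩ :=
        stepL (μ 0) (μ 1) (μ 2) (hna 1) hB3 hB2 hB1'm hTm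
          d23.symm d3B1' d2B1' d3T d2T hdisj' covA
          (le_of_eq e23)
          (by rw [hadd (μ 0), e12, e23])
          s23
          (le_of_eq hB1'mu)
          hc3
          hc2
      have covx : ∀ x, x ∈ F1 ∨ x ∈ FA ∨ x ∈ FB := fun x => by
        have h : x ∈ F1 ∪ FA ∪ FB := cov.symm ▸ Set.mem_univ x
        simp only [Set.mem_union] at h
        tauto
      exact pack μ mF1 mFA mFB D1A D1B DAB covx i1A i1B iA1 iAB iB1 iBA
    · exact caseII (Or.inr hc3)
  · exact caseII (Or.inl hc2)

end SCaux

/-- For three finite non-atomic measures there exists a strong (envy-free) solution to the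
fair division problem. -/
theorem stmt7 {α : Type*} [MeasurableSpace α] (μ : Fin 3 → Measure α)
    (hfin : ∀ i, IsFiniteMeasure (μ i)) (hna : ∀ i, Nonatomic (μ i)) :
    ∃ F : Fin 3 → Set α,
      (∀ i, MeasurableSet (F i)) ∧
      Pairwise (Function.onFun Disjoint F) ∧
      (⋃ i, F i) = Set.univ ∧
      ∀ i j, μ i (F j) ≤ μ i (F i) := by
  haveI := hfin 0
  obtain ⟨X1, X2, X3, h1, h2, h3, _, _, _, d12, d13, d23, hucov, e1, e2, e3⟩ :=
    SCaux.third_split (μ 0) (hna 0) MeasurableSet.univ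
  have hcov : ∀ x, x ∈ X1 ∨ x ∈ X2 ∨ x ∈ X3 := fun x => by
    have h : x ∈ X1 ∪ X2 ∪ X3 := by rw [hucov]; trivial
    simp only [Set.mem_union] at h
    tauto
  rcases le_total ((μ 1) X1) ((μ 1) X2) with hab | hab
  · rcases le_total ((μ 1) X2) ((μ 1) X3) with hbc | hbc
    · exact SCaux.sortedCase μ hfin hna h3 h2 h1 d23.symm d13.symm d12.symm
        (fun x => by have := hcov x; tauto) (by rw [e3, e2]) (by rw [e2, e1]) hbc hab
    · rcases le_total ((μ 1) X1) ((μ 1) X3) with hac | hac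
      · exact SCaux.sortedCase μ hfin hna h2 h3 h1 d23 d12.symm d13.symm
          (fun x => by have := hcov x; tauto) (by rw [e2, e3]) (by rw [e3, e1]) hbc hac
      · exact SCaux.sortedCase μ hfin hna h2 h1 h3 d12.symm d23 d13
          (fun x => by have := hcov x; tauto) (by rw [e2, e1]) (by rw [e1, e3]) hab hac
  · rcases le_total ((μ 1) X1) ((μ 1) X3) with hac | hac
    · exact SCaux.sortedCase μ hfin hna h3 h1 h2 d13.symm d23.symm d12
        (fun x => by have := hcov x; tauto) (by rw [e3, e1]) (by rw [e1, e2]) hac hab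
    · rcases le_total ((μ 1) X2) ((μ 1) X3) with hbc | hbc
      · exact SCaux.sortedCase μ hfin hna h1 h3 h2 d13 d12 d23.symm
          (fun x => by have := hcov x; tauto) (by rw [e1, e3]) (by rw [e3, e2]) hac hbc
      · exact SCaux.sortedCase μ hfin hna h1 h2 h3 d12 d13 d23
          (fun x => by have := hcov x; tauto) (by rw [e1, e2]) (by rw [e2, e3]) hab hbc
end

section
/- Let μ_1,...,μ_r be finite non-atomic countably additive measures on M and define μ = (1/r) Σ_{i=1}^r μ_i. Suppose sets H_1, H_2, ... are chosen so that H_k is a μ_t-satisfying subset of M \ ∪_{i<k} H_i where t ≡ k (mod r), i.e. μ_t(H_k) ≥ 2^{-(r-1)} μ_t(M \ ∪_{i<k} H_i). Then with M_s = M \ ∪_{i=1}^{sr} H_i one has μ(M_s) ≤ ((2^{r-1}-1)/2^{r-1}) μ(M_{s-1}), and consequently μ(M_s) ≤ ((2^{r-1}-1)/2^{r-1})^s μ(M). -/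
open MeasureTheory

private lemma aux_mono {α : Type*} (H : ℕ → Set α) {m n : ℕ} (h : m ≤ n) :
    (Set.univ \ ⋃ i ∈ Finset.Icc 1 n, H i) ⊆ (Set.univ \ ⋃ i ∈ Finset.Icc 1 m, H i) := by
  apply Set.diff_subset_diff_right
  intro x hx
  simp only [Set.mem_iUnion, Finset.mem_Icc] at hx ⊢
  obtain ⟨i, ⟨h1, h2⟩, hxi⟩ := hx
  exact ⟨i, ⟨h1, h2.trans h⟩, hxi⟩

private lemma aux_step {α : Type*} (H : ℕ → Set α) (k : ℕ) (hk : 1 ≤ k) :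
    (Set.univ \ ⋃ i ∈ Finset.Icc 1 k, H i) =
      (Set.univ \ ⋃ i ∈ Finset.Icc 1 (k - 1), H i) \ H k := by
  have hIcc : Finset.Icc 1 k = insert k (Finset.Icc 1 (k - 1)) := by
    ext i; simp only [Finset.mem_Icc, Finset.mem_insert]; omega
  rw [hIcc, Finset.set_biUnion_insert, Set.union_comm, Set.diff_diff]

/-- Exponential decay of the averaged measure of the remainder sets in the iterative
construction of a strong solution. -/
theorem stmt9 {α : Type*} [MeasurableSpace α] (r : ℕ) (hr : 0 < r)
    (μi : Fin r → Measure α)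
    (hfin : ∀ i, IsFiniteMeasure (μi i))
    (H : ℕ → Set α)
    (hmeas : ∀ k, MeasurableSet (H k))
    (hsub : ∀ k, 1 ≤ k → H k ⊆ Set.univ \ ⋃ i ∈ Finset.Icc 1 (k - 1), H i)
    (hsat : ∀ k, 1 ≤ k →
      μi ⟨(k - 1) % r, Nat.mod_lt _ hr⟩ (Set.univ \ ⋃ i ∈ Finset.Icc 1 (k - 1), H i) / 2 ^ (r - 1)
        ≤ μi ⟨(k - 1) % r, Nat.mod_lt _ hr⟩ (H k)) :
    (∀ s : ℕ, 1 ≤ s →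
      (1 / (r : ℝ)) * ∑ j, (μi j (Set.univ \ ⋃ i ∈ Finset.Icc 1 (s * r), H i)).toReal ≤
        (((2 : ℝ) ^ (r - 1) - 1) / 2 ^ (r - 1)) *
          ((1 / (r : ℝ)) *
            ∑ j, (μi j (Set.univ \ ⋃ i ∈ Finset.Icc 1 ((s - 1) * r), H i)).toReal)) ∧
    (∀ s : ℕ,
      (1 / (r : ℝ)) * ∑ j, (μi j (Set.univ \ ⋃ i ∈ Finset.Icc 1 (s * r), H i)).toReal ≤
        (((2 : ℝ) ^ (r - 1) - 1) / 2 ^ (r - 1)) ^ s *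
          ((1 / (r : ℝ)) * ∑ j, (μi j (Set.univ : Set α)).toReal)) := by
  have := hfin
  set A : ℕ → Set α := fun n => Set.univ \ ⋃ i ∈ Finset.Icc 1 n, H i with hAdef
  set c : ℝ := ((2 : ℝ) ^ (r - 1) - 1) / 2 ^ (r - 1) with hcdef
  have h2pos : (0 : ℝ) < 2 ^ (r - 1) := by positivity
  have h2one : (1 : ℝ) ≤ 2 ^ (r - 1) := one_le_pow₀ (by norm_num)
  have hc0 : 0 ≤ c := div_nonneg (by linarith) (le_of_lt h2pos)
  have hcx : ∀ x : ℝ, c * x = x - x / 2 ^ (r - 1) := by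
    intro x; rw [hcdef]; field_simp
  -- key per-measure inequality
  have key : ∀ s : ℕ, 1 ≤ s → ∀ j : Fin r,
      (μi j (A (s * r))).toReal ≤ c * (μi j (A ((s - 1) * r))).toReal := by
    intro s hs j
    set k : ℕ := (s - 1) * r + (j : ℕ) + 1 with hkdef
    have hk1 : 1 ≤ k := by omega
    have hkm : k - 1 = (s - 1) * r + (j : ℕ) := by omega
    have hk2 : k ≤ s * r := by
      have : (s - 1) * r + r = s * r := by
        rw [← Nat.succ_mul, show (s-1).succ = s by omega]
      have := j.isLt
      omega
    have htidx : (⟨(k - 1) % r, Nat.mod_lt _ hr⟩ : Fin r) = j := by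
      apply Fin.ext
      simp only [hkm]
      rw [add_comm, Nat.add_mul_mod_self_right, Nat.mod_eq_of_lt j.isLt]
    have hsat' := hsat k hk1
    rw [htidx] at hsat'
    have hsubk : H k ⊆ A (k - 1) := hsub k hk1
    have hsplit : μi j (A (k - 1)) = μi j (A k) + μi j (H k) := by
      have hAk : A k = A (k - 1) \ H k := aux_step H k hk1
      rw [hAk]
      conv_lhs => rw [← Set.diff_union_of_subset hsubk]
      exact measure_union disjoint_sdiff_self_left (hmeas k)
    have hfin' : ∀ S : Set α, μi j S ≠ ⊤ := fun S => measure_ne_top _ S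
    have hsplitR : (μi j (A (k - 1))).toReal
        = (μi j (A k)).toReal + (μi j (H k)).toReal := by
      rw [hsplit, ENNReal.toReal_add (hfin' _) (hfin' _)]
    have hsatR : (μi j (A (k - 1))).toReal / 2 ^ (r - 1) ≤ (μi j (H k)).toReal := by
      have := ENNReal.toReal_mono (hfin' _) hsat'
      rwa [ENNReal.toReal_div, ENNReal.toReal_pow, ENNReal.toReal_ofNat] at this
    have hm1 : (μi j (A (s * r))).toReal ≤ (μi j (A k)).toReal :=
      ENNReal.toReal_mono (hfin' _) (measure_mono (aux_mono H hk2))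
    have hm2 : (μi j (A (k - 1))).toReal ≤ (μi j (A ((s - 1) * r))).toReal :=
      ENNReal.toReal_mono (hfin' _) (measure_mono (aux_mono H (by omega)))
    have step1 : (μi j (A k)).toReal ≤ c * (μi j (A (k - 1))).toReal := by
      rw [hcx]; linarith
    calc (μi j (A (s * r))).toReal ≤ c * (μi j (A (k - 1))).toReal := le_trans hm1 step1
      _ ≤ c * (μi j (A ((s - 1) * r))).toReal := by
          exact mul_le_mul_of_nonneg_left hm2 hc0
  have part1 : ∀ s : ℕ, 1 ≤ s →
      (1 / (r : ℝ)) * ∑ j, (μi j (A (s * r))).toReal ≤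
        c * ((1 / (r : ℝ)) * ∑ j, (μi j (A ((s - 1) * r))).toReal) := by
    intro s hs
    have hsum : ∑ j, (μi j (A (s * r))).toReal ≤ ∑ j, c * (μi j (A ((s - 1) * r))).toReal :=
      Finset.sum_le_sum fun j _ => key s hs j
    rw [← Finset.mul_sum] at hsum
    have hrpos : (0 : ℝ) ≤ 1 / (r : ℝ) := by positivity
    calc (1 / (r : ℝ)) * ∑ j, (μi j (A (s * r))).toReal
        ≤ (1 / (r : ℝ)) * (c * ∑ j, (μi j (A ((s - 1) * r))).toReal) :=
          mul_le_mul_of_nonneg_left hsum hrpos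
      _ = c * ((1 / (r : ℝ)) * ∑ j, (μi j (A ((s - 1) * r))).toReal) := by ring
  refine ⟨part1, ?_⟩
  intro s
  induction s with
  | zero =>
      have hA0 : A 0 = Set.univ := by
        show Set.univ \ _ = _
        rw [Finset.Icc_eq_empty (by omega)]
        simp
      simp [hA0]
  | succ n ih =>
      have h1 := part1 (n + 1) (by omega)
      simp only [Nat.add_sub_cancel] at h1
      calc (1 / (r : ℝ)) * ∑ j, (μi j (A ((n + 1) * r))).toReal
          ≤ c * ((1 / (r : ℝ)) * ∑ j, (μi j (A (n * r))).toReal) := h1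
        _ ≤ c * (c ^ n * ((1 / (r : ℝ)) * ∑ j, (μi j (Set.univ : Set α)).toReal)) :=
            mul_le_mul_of_nonneg_left ih hc0
        _ = c ^ (n + 1) * ((1 / (r : ℝ)) * ∑ j, (μi j (Set.univ : Set α)).toReal) := by ring
end

section
/- Let ψ_1, ψ_2 be non-atomic charges on M with Hahn decompositions M = M_1⁺ ⊔ M_1⁻ = M_2⁺ ⊔ M_2⁻. Define M^{++} = M_1⁺ ∩ M_2⁺, M^{+-} = M_1⁺ ∩ M_2⁻, M^{-+} = M_1⁻ ∩ M_2⁺, M^{--} = M_1⁻ ∩ M_2⁻. If {B_1, B_2} is a strong solution on M^{++} for ψ_1, ψ_2 and {C_1, C_2} is a strong solution on M^{--}, then F_1 = B_1 ∪ C_1 ∪ M^{+-} and F_2 = B_2 ∪ C_2 ∪ M^{-+} form a strong solution on M for ψ_1, ψ_2. -/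
open MeasureTheory

/-- Combining strong solutions on `M⁺⁺` and `M⁻⁻` with the "mixed" parts `M⁺⁻` and `M⁻⁺`
gives a strong solution on the whole space for two charges. -/
theorem stmt19 {α : Type*} [MeasurableSpace α]
    (ψ₁ ψ₂ : SignedMeasure α)
    (P₁ N₁ P₂ N₂ : Set α)
    (hP₁ : MeasurableSet P₁) (hN₁ : MeasurableSet N₁)
    (hP₂ : MeasurableSet P₂) (hN₂ : MeasurableSet N₂)
    (hcov₁ : P₁ ∪ N₁ = Set.univ) (hdis₁ : Disjoint P₁ N₁)
    (hcov₂ : P₂ ∪ N₂ = Set.univ) (hdis₂ : Disjoint P₂ N₂)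
    (hpos₁ : ∀ A ⊆ P₁, MeasurableSet A → 0 ≤ ψ₁ A)
    (hneg₁ : ∀ A ⊆ N₁, MeasurableSet A → ψ₁ A ≤ 0)
    (hpos₂ : ∀ A ⊆ P₂, MeasurableSet A → 0 ≤ ψ₂ A)
    (hneg₂ : ∀ A ⊆ N₂, MeasurableSet A → ψ₂ A ≤ 0)
    (B₁ B₂ C₁ C₂ : Set α)
    (hB₁ : MeasurableSet B₁) (hB₂ : MeasurableSet B₂)
    (hC₁ : MeasurableSet C₁) (hC₂ : MeasurableSet C₂)
    (hBdisj : Disjoint B₁ B₂) (hBcov : B₁ ∪ B₂ = P₁ ∩ P₂)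
    (hCdisj : Disjoint C₁ C₂) (hCcov : C₁ ∪ C₂ = N₁ ∩ N₂)
    (hBstrong₁ : ψ₁ B₂ ≤ ψ₁ B₁) (hBstrong₂ : ψ₂ B₁ ≤ ψ₂ B₂)
    (hCstrong₁ : ψ₁ C₂ ≤ ψ₁ C₁) (hCstrong₂ : ψ₂ C₁ ≤ ψ₂ C₂) :
    Disjoint (B₁ ∪ C₁ ∪ (P₁ ∩ N₂)) (B₂ ∪ C₂ ∪ (N₁ ∩ P₂)) ∧
    (B₁ ∪ C₁ ∪ (P₁ ∩ N₂)) ∪ (B₂ ∪ C₂ ∪ (N₁ ∩ P₂)) = Set.univ ∧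
    ψ₁ (B₂ ∪ C₂ ∪ (N₁ ∩ P₂)) ≤ ψ₁ (B₁ ∪ C₁ ∪ (P₁ ∩ N₂)) ∧
    ψ₂ (B₁ ∪ C₁ ∪ (P₁ ∩ N₂)) ≤ ψ₂ (B₂ ∪ C₂ ∪ (N₁ ∩ P₂)) := by

  -- subset facts
  have hB1s : B₁ ⊆ P₁ ∩ P₂ := hBcov ▸ Set.subset_union_left
  have hB2s : B₂ ⊆ P₁ ∩ P₂ := hBcov ▸ Set.subset_union_right
  have hC1s : C₁ ⊆ N₁ ∩ N₂ := hCcov ▸ Set.subset_union_left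
  have hC2s : C₂ ⊆ N₁ ∩ N₂ := hCcov ▸ Set.subset_union_right
  have dPN : Disjoint (P₁ ∩ P₂) (N₁ ∩ N₂) :=
    hdis₁.mono Set.inter_subset_left Set.inter_subset_left
  -- pairwise disjointness pieces
  have d12 : Disjoint B₁ C₂ := dPN.mono hB1s hC2s
  have d13 : Disjoint B₁ (N₁ ∩ P₂) :=
    hdis₁.mono (hB1s.trans Set.inter_subset_left) Set.inter_subset_left
  have d21 : Disjoint C₁ B₂ := (dPN.symm).mono hC1s hB2s
  have d23 : Disjoint C₁ (N₁ ∩ P₂) :=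
    hdis₂.symm.mono (hC1s.trans Set.inter_subset_right) Set.inter_subset_right
  have d31 : Disjoint (P₁ ∩ N₂) B₂ :=
    hdis₂.symm.mono Set.inter_subset_right (hB2s.trans Set.inter_subset_right)
  have d32 : Disjoint (P₁ ∩ N₂) C₂ :=
    hdis₁.mono Set.inter_subset_left (hC2s.trans Set.inter_subset_left)
  have d33 : Disjoint (P₁ ∩ N₂) (N₁ ∩ P₂) :=
    hdis₁.mono Set.inter_subset_left Set.inter_subset_left
  have dB1PN : Disjoint B₁ (P₁ ∩ N₂) :=
    hdis₂.mono (hB1s.trans Set.inter_subset_right) Set.inter_subset_right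
  have dC1PN : Disjoint C₁ (P₁ ∩ N₂) :=
    hdis₁.symm.mono (hC1s.trans Set.inter_subset_left) Set.inter_subset_left
  have dB2NP : Disjoint B₂ (N₁ ∩ P₂) :=
    hdis₁.mono (hB2s.trans Set.inter_subset_left) Set.inter_subset_left
  have dC2NP : Disjoint C₂ (N₁ ∩ P₂) :=
    hdis₂.symm.mono (hC2s.trans Set.inter_subset_right) Set.inter_subset_right
  have hdisjF : Disjoint (B₁ ∪ C₁ ∪ (P₁ ∩ N₂)) (B₂ ∪ C₂ ∪ (N₁ ∩ P₂)) :=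
    (((hBdisj.union_right d12).union_right d13).union_left
      ((d21.union_right hCdisj).union_right d23)).union_left
      ((d31.union_right d32).union_right d33)
  have hcovF : (B₁ ∪ C₁ ∪ (P₁ ∩ N₂)) ∪ (B₂ ∪ C₂ ∪ (N₁ ∩ P₂)) = Set.univ := by
    apply Set.eq_univ_of_forall
    intro x
    have h1 : x ∈ P₁ ∨ x ∈ N₁ := by
      rw [← Set.mem_union, hcov₁]; trivial
    have h2 : x ∈ P₂ ∨ x ∈ N₂ := by
      rw [← Set.mem_union, hcov₂]; trivial
    rcases h1 with h1 | h1 <;> rcases h2 with h2 | h2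
    · have : x ∈ B₁ ∪ B₂ := hBcov ▸ ⟨h1, h2⟩
      rcases this with h | h
      · exact Or.inl (Or.inl (Or.inl h))
      · exact Or.inr (Or.inl (Or.inl h))
    · exact Or.inl (Or.inr ⟨h1, h2⟩)
    · exact Or.inr (Or.inr ⟨h1, h2⟩)
    · have : x ∈ C₁ ∪ C₂ := hCcov ▸ ⟨h1, h2⟩
      rcases this with h | h
      · exact Or.inl (Or.inl (Or.inr h))
      · exact Or.inr (Or.inl (Or.inr h))
  have mPN : MeasurableSet (P₁ ∩ N₂) := hP₁.inter hN₂
  have mNP : MeasurableSet (N₁ ∩ P₂) := hN₁.inter hP₂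
  have e1 : ∀ (ψ : SignedMeasure α), ψ (B₁ ∪ C₁ ∪ (P₁ ∩ N₂)) = ψ B₁ + ψ C₁ + ψ (P₁ ∩ N₂) := by
    intro ψ
    rw [ψ.of_union (dB1PN.union_left dC1PN) (hB₁.union hC₁) mPN,
      ψ.of_union (dPN.mono hB1s hC1s) hB₁ hC₁]
  have e2 : ∀ (ψ : SignedMeasure α), ψ (B₂ ∪ C₂ ∪ (N₁ ∩ P₂)) = ψ B₂ + ψ C₂ + ψ (N₁ ∩ P₂) := by
    intro ψ
    rw [ψ.of_union (dB2NP.union_left dC2NP) (hB₂.union hC₂) mNP,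
      ψ.of_union (dPN.mono hB2s hC2s) hB₂ hC₂]
  refine ⟨hdisjF, hcovF, ?_, ?_⟩
  · rw [e1 ψ₁, e2 ψ₁]
    have h3 : ψ₁ (N₁ ∩ P₂) ≤ 0 := hneg₁ _ Set.inter_subset_left mNP
    have h4 : 0 ≤ ψ₁ (P₁ ∩ N₂) := hpos₁ _ Set.inter_subset_left mPN
    linarith
  · rw [e1 ψ₂, e2 ψ₂]
    have h3 : ψ₂ (P₁ ∩ N₂) ≤ 0 := hneg₂ _ Set.inter_subset_right mPN
    have h4 : 0 ≤ ψ₂ (N₁ ∩ P₂) := hpos₂ _ Set.inter_subset_right mNP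
    linarith
end
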